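/- The circular variance σ²(κ) = 1 - I₁(κ)/I₀(κ) of the von Mises distribution tends to 0 as κ → ∞. More precisely, σ²(κ) = 1/(2κ) + O(1/κ²) as κ → ∞. -/

import Mathlib

open Real Filter Asymptotics intervalIntegral

noncomputable def besselI0 (κ : ℝ) : ℝ :=
  (1 / (2 * Real.pi)) * ∫ t in (0 : ℝ)..(2 * Real.pi), Real.exp (κ * Real.cos t)

noncomputable def besselI1 (κ : ℝ) : ℝ :=
  (1 / (2 * Real.pi)) * ∫ t in (0 : ℝ)..(2 * Real.pi), Real.cos t * Real.exp (κ * Real.cos t)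

noncomputable def circularVariance (κ : ℝ) : ℝ := 1 - besselI1 κ / besselI0 κ

/-!
With `B = ∫₀^{2π} e^{κ cos t} dt` and `C = ∫₀^{2π} cos t · e^{κ cos t} dt` we have
`σ² = 1 - C / B`, so `σ² - 1/(2κ) = S / (2κB)` with
`S = ∫₀^{2π} (2κ(1 - cos t) - 1) e^{κ cos t} dt`. Up to the term `tan²(t/2) e^{κ cos t}`,
this integrand is the derivative of `-2 tan(t/2) e^{κ cos t}`. Folding `[0, 2π]` onto `[0, π]`
and integrating by parts on `[0, π/2]` leaves the boundary value `-2`, the integral of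
`tan²(t/2) e^{κ cos t} ≤ (t²/2) e^κ e^{-κt²/5}`, which is `O(e^κ κ^{-3/2})` by comparison with a
Gaussian, and an integral over `[π/2, π]` where `e^{κ cos t} ≤ 1`. Hence `S = O(e^κ κ^{-3/2})`,
while `B ≥ e^κ / (2√κ)` from the interval `[0, 1/√κ]`, so `σ² - 1/(2κ) = O(κ⁻²)`.
-/

open Set MeasureTheory

theorem cos_half_pos {t : ℝ} (ht : t ∈ Ioo (-π) π) : 0 < cos (t / 2) :=
  cos_pos_of_mem_Ioo ⟨by linarith [ht.1], by linarith [ht.2]⟩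

theorem continuousOn_tan_half : ContinuousOn (fun t => tan (t / 2)) (Ioo (-π) π) :=
  continuousOn_tan_Ioo.comp (continuousOn_id.div_const 2) fun t ht =>
    ⟨by linarith [ht.1], by linarith [ht.2]⟩

theorem uIcc_zero_pi_div_two_subset_Ioo : uIcc 0 (π / 2) ⊆ Ioo (-π) π := by
  rw [uIcc_of_le (by positivity)]
  exact Icc_subset_Ioo (by linarith [pi_pos]) (by linarith [pi_pos])

theorem tan_half_sq_le {t : ℝ} (ht₀ : 0 ≤ t) (ht : t ≤ π / 2) : tan (t / 2) ^ 2 ≤ t ^ 2 / 2 := by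
  have hsin : sin (t / 2) ≤ t / 2 := sin_le (by linarith)
  have hsin₀ : 0 ≤ sin (t / 2) := sin_nonneg_of_nonneg_of_le_pi (by linarith) (by linarith [pi_pos])
  have hcos : 1 / 2 ≤ cos (t / 2) ^ 2 := by
    have := cos_le_cos_of_nonneg_of_le_pi (x := t / 2) (y := π / 4) (by linarith)
      (by linarith [pi_pos]) (by linarith)
    rw [cos_pi_div_four] at this
    nlinarith [sq_sqrt (show (0 : ℝ) ≤ 2 by norm_num), sqrt_nonneg 2]
  rw [tan_eq_sin_div_cos, div_pow, div_le_iff₀ (by linarith)]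
  nlinarith

theorem cos_le_one_sub_sq_div_five {t : ℝ} (ht : |t| ≤ π) : cos t ≤ 1 - t ^ 2 / 5 := by
  have h : 1 / 5 ≤ 2 / π ^ 2 := by
    rw [div_le_div_iff₀ (by norm_num) (by positivity)]
    nlinarith [pi_lt_d2, pi_pos]
  nlinarith [cos_le_one_sub_mul_cos_sq ht, mul_le_mul_of_nonneg_right h (sq_nonneg t)]

theorem exp_one_half_le_two : exp (1 / 2) ≤ 2 := by
  rw [exp_half, sqrt_le_left (by norm_num)]
  linarith [exp_one_lt_d9]

theorem integral_exp_neg_mul_sq_le {b a : ℝ} (hb : 0 < b) (ha : 0 ≤ a) :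
    ∫ t in 0..a, exp (-b * t ^ 2) ≤ √(π / b) / 2 := by
  rw [← integral_gaussian_Ioi b, integral_of_le ha]
  exact setIntegral_mono_set (integrable_exp_neg_mul_sq hb).integrableOn
    (ae_of_all _ fun _ => (exp_pos _).le) (ae_of_all _ Ioc_subset_Ioi_self)

theorem integral_zero_two_pi_eq_two_mul_integral_zero_pi {f : ℝ → ℝ} (hf : Continuous f)
    (hsymm : ∀ t, f (2 * π - t) = f t) :
    ∫ t in 0..2 * π, f t = 2 * ∫ t in 0..π, f t := by
  have hreflect : ∫ t in π..2 * π, f t = ∫ t in 0..π, f t := by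
    have := integral_comp_sub_left f (2 * π) (a := 0) (b := π)
    simp only [hsymm, show 2 * π - π = π by ring, sub_zero] at this
    exact this.symm
  rw [← integral_add_adjacent_intervals (hf.intervalIntegrable 0 π)
    (hf.intervalIntegrable π (2 * π)), hreflect, two_mul]

noncomputable def varianceDefect (κ t : ℝ) : ℝ := (2 * κ * (1 - cos t) - 1) * exp (κ * cos t)

theorem continuous_varianceDefect (κ : ℝ) : Continuous (varianceDefect κ) := by
  unfold varianceDefect; fun_prop

theorem hasDerivAt_neg_two_mul_tan_half_mul_exp_mul_cos (κ : ℝ) {t : ℝ} (ht : cos (t / 2) ≠ 0) :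
    HasDerivAt (fun s => -2 * tan (s / 2) * exp (κ * cos s))
      (varianceDefect κ t - tan (t / 2) ^ 2 * exp (κ * cos t)) t := by
  have htan : HasDerivAt (fun s => tan (s / 2)) (1 / cos (t / 2) ^ 2 * (1 / 2)) t :=
    (hasDerivAt_tan ht).comp (h₂ := tan) t ((hasDerivAt_id t).div_const 2)
  refine ((htan.const_mul (-2)).mul ((hasDerivAt_cos t).const_mul κ).exp).congr_deriv ?_
  obtain ⟨u, rfl⟩ : ∃ u, t = 2 * u := ⟨t / 2, by ring⟩
  rw [mul_div_cancel_left₀ u two_ne_zero] at ht ⊢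
  rw [varianceDefect, tan_eq_sin_div_cos, sin_two_mul, cos_two_mul]
  field_simp
  linear_combination (1 + 4 * κ * cos u ^ 2) * sin_sq_add_cos_sq u

theorem intervalIntegrable_tan_half_sq_mul_exp_mul_cos (κ : ℝ) :
    IntervalIntegrable (fun t => tan (t / 2) ^ 2 * exp (κ * cos t)) volume 0 (π / 2) :=
  ((continuousOn_tan_half.mono uIcc_zero_pi_div_two_subset_Ioo).pow 2 |>.mul
    (by fun_prop : Continuous fun t => exp (κ * cos t)).continuousOn).intervalIntegrable

theorem integral_varianceDefect_zero_pi_div_two (κ : ℝ) :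
    ∫ t in 0..π / 2, varianceDefect κ t =
      -2 + ∫ t in 0..π / 2, tan (t / 2) ^ 2 * exp (κ * cos t) := by
  have hG := (continuous_varianceDefect κ).intervalIntegrable (μ := volume) 0 (π / 2)
  have hT := intervalIntegrable_tan_half_sq_mul_exp_mul_cos κ
  have hftc := integral_eq_sub_of_hasDerivAt (fun t ht =>
    hasDerivAt_neg_two_mul_tan_half_mul_exp_mul_cos κ
      (cos_half_pos (uIcc_zero_pi_div_two_subset_Ioo ht)).ne') (hG.sub hT)
  rw [integral_sub hG hT, show π / 2 / 2 = π / 4 by ring] at hftc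
  norm_num [tan_pi_div_four] at hftc
  linarith

theorem tan_half_sq_mul_exp_mul_cos_le {κ t : ℝ} (hκ : 0 < κ) (ht₀ : 0 ≤ t) (ht : t ≤ π / 2) :
    tan (t / 2) ^ 2 * exp (κ * cos t) ≤ 5 * exp κ / κ * exp (-(κ / 10) * t ^ 2) := by
  have hexp : exp (κ * cos t) ≤ exp κ * exp (-(κ / 5) * t ^ 2) := by
    rw [← exp_add, exp_le_exp]
    have := cos_le_one_sub_sq_div_five (t := t) (by rw [abs_of_nonneg ht₀]; linarith [pi_pos])
    nlinarith
  -- `x e^{-x} ≤ 1` with `x = κ t² / 10` absorbs the factor `t²` at the cost of `1 / κ`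
  have hsq : t ^ 2 / 2 * exp (-(κ / 10) * t ^ 2) ≤ 5 / κ := by
    have := (mul_exp_neg_le_exp_neg_one (κ / 10 * t ^ 2)).trans (exp_le_one_iff.2 (by norm_num))
    rw [le_div_iff₀ hκ, neg_mul]
    linarith
  calc tan (t / 2) ^ 2 * exp (κ * cos t)
      ≤ t ^ 2 / 2 * (exp κ * exp (-(κ / 5) * t ^ 2)) :=
        mul_le_mul (tan_half_sq_le ht₀ ht) hexp (exp_pos _).le (by positivity)
    _ = exp κ * (t ^ 2 / 2 * exp (-(κ / 10) * t ^ 2)) * exp (-(κ / 10) * t ^ 2) := by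
        rw [show -(κ / 5) * t ^ 2 = -(κ / 10) * t ^ 2 + -(κ / 10) * t ^ 2 by ring, exp_add]; ring
    _ ≤ exp κ * (5 / κ) * exp (-(κ / 10) * t ^ 2) := by gcongr
    _ = 5 * exp κ / κ * exp (-(κ / 10) * t ^ 2) := by ring

theorem integral_tan_half_sq_mul_exp_mul_cos_le {κ : ℝ} (hκ : 0 < κ) :
    ∫ t in 0..π / 2, tan (t / 2) ^ 2 * exp (κ * cos t) ≤ 15 * exp κ / (κ * √κ) := by
  have hpi : 0 ≤ π / 2 := by positivity
  have hsqrt : √(π / (κ / 10)) ≤ 6 / √κ := by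
    rw [div_div_eq_mul_div, sqrt_div' _ hκ.le]
    gcongr
    rw [sqrt_le_left (by norm_num)]
    nlinarith [pi_lt_d2]
  calc ∫ t in 0..π / 2, tan (t / 2) ^ 2 * exp (κ * cos t)
      ≤ ∫ t in 0..π / 2, 5 * exp κ / κ * exp (-(κ / 10) * t ^ 2) := by
        refine integral_mono_on hpi (intervalIntegrable_tan_half_sq_mul_exp_mul_cos κ)
          (Continuous.intervalIntegrable (by fun_prop) _ _)
          fun t ht => tan_half_sq_mul_exp_mul_cos_le hκ ht.1 ht.2
    _ = 5 * exp κ / κ * ∫ t in 0..π / 2, exp (-(κ / 10) * t ^ 2) := integral_const_mul _ _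
    _ ≤ 5 * exp κ / κ * (6 / √κ / 2) := by
        gcongr
        exact (integral_exp_neg_mul_sq_le (by positivity) hpi).trans (by gcongr)
    _ = 15 * exp κ / (κ * √κ) := by field_simp; ring

theorem abs_integral_varianceDefect_pi_div_two_pi_le {κ : ℝ} (hκ : 0 ≤ κ) :
    |∫ t in π / 2..π, varianceDefect κ t| ≤ (4 * κ + 1) * (π / 2) := by
  have hpi : π / 2 ≤ π := by linarith [pi_pos]
  have key : ∀ t ∈ uIoc (π / 2) π, ‖varianceDefect κ t‖ ≤ 4 * κ + 1 := by
    intro t ht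
    rw [uIoc_of_le hpi] at ht
    have hcos : cos t ≤ 0 := cos_nonpos_of_pi_div_two_le_of_le ht.1.le (by linarith [ht.2])
    have hexp : exp (κ * cos t) ≤ 1 := exp_le_one_iff.2 (mul_nonpos_of_nonneg_of_nonpos hκ hcos)
    have hfac : |2 * κ * (1 - cos t) - 1| ≤ 4 * κ + 1 := by
      rw [abs_le]; constructor <;> nlinarith [neg_one_le_cos t]
    rw [varianceDefect, norm_mul, norm_of_nonneg (exp_pos _).le, norm_eq_abs]
    nlinarith [abs_nonneg (2 * κ * (1 - cos t) - 1), exp_pos (κ * cos t)]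
  have := norm_integral_le_of_norm_le_const key
  rwa [norm_eq_abs, show π - π / 2 = π / 2 by ring, abs_of_pos (a := π / 2) (by positivity)] at this

theorem abs_integral_varianceDefect_le {κ : ℝ} (hκ : 0 < κ) :
    |∫ t in 0..2 * π, varianceDefect κ t| ≤
      2 * (15 * exp κ / (κ * √κ) + 2 + (4 * κ + 1) * (π / 2)) := by
  have hint (a b : ℝ) := (continuous_varianceDefect κ).intervalIntegrable (μ := volume) a b
  rw [integral_zero_two_pi_eq_two_mul_integral_zero_pi (continuous_varianceDefect κ)
      fun t => by simp only [varianceDefect, cos_two_pi_sub],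
    ← integral_add_adjacent_intervals (hint 0 (π / 2)) (hint (π / 2) π),
    integral_varianceDefect_zero_pi_div_two]
  have hT₀ : 0 ≤ ∫ t in 0..π / 2, tan (t / 2) ^ 2 * exp (κ * cos t) :=
    integral_nonneg (by positivity) fun t _ => by positivity
  have hT := integral_tan_half_sq_mul_exp_mul_cos_le hκ
  have hP := abs_le.1 (abs_integral_varianceDefect_pi_div_two_pi_le hκ.le)
  rw [abs_le]
  constructor <;> linarith [hP.1, hP.2]

theorem eventually_le_exp_div_mul_sqrt :
    ∀ᶠ κ : ℝ in atTop, 2 + (4 * κ + 1) * (π / 2) ≤ exp κ / (κ * √κ) := by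
  filter_upwards [eventually_ge_atTop 1, (tendsto_exp_div_pow_atTop 3).eventually_ge_atTop 12]
    with κ hκ hexp
  have hκ₀ : 0 < κ := by linarith
  have hsqrt : √κ ≤ κ := sqrt_le_left hκ₀.le |>.2 (by nlinarith)
  rw [le_div_iff₀ (by positivity)] at hexp ⊢
  have hpoly : 2 + (4 * κ + 1) * (π / 2) ≤ 12 * κ := by nlinarith [pi_lt_d2]
  calc (2 + (4 * κ + 1) * (π / 2)) * (κ * √κ) ≤ 12 * κ * (κ * κ) := by gcongr
    _ ≤ exp κ := by linarith

theorem exp_div_two_mul_sqrt_le_integral_exp_mul_cos {κ : ℝ} (hκ : 1 ≤ κ) :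
    exp κ / (2 * √κ) ≤ ∫ t in 0..2 * π, exp (κ * cos t) := by
  have hκ₀ : 0 < κ := by linarith
  have hsqrt : 1 ≤ √κ := one_le_sqrt.2 hκ
  set δ := 1 / √κ with hδ
  have hδ₀ : 0 < δ := by positivity
  have hδ₁ : δ ≤ 1 := by rw [hδ, div_le_one (by positivity)]; exact hsqrt
  -- on `[0, 1/√κ]` the exponent `κ cos t` stays within `1/2` of its maximum `κ`
  have hhead : ∀ t ∈ Icc 0 δ, exp κ / 2 ≤ exp (κ * cos t) := by
    intro t ht
    have hκt : κ * t ^ 2 ≤ 1 := by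
      have : t ^ 2 ≤ δ ^ 2 := pow_le_pow_left₀ ht.1 ht.2 2
      rwa [hδ, div_pow, sq_sqrt hκ₀.le, le_div_iff₀ hκ₀, one_pow, mul_comm] at this
    calc exp κ / 2 ≤ exp κ / exp (1 / 2) := by gcongr; exact exp_one_half_le_two
      _ = exp (κ - 1 / 2) := (exp_sub _ _).symm
      _ ≤ exp (κ * cos t) := exp_le_exp.2 (by nlinarith [one_sub_sq_div_two_le_cos (x := t)])
  calc exp κ / (2 * √κ) = ∫ _ in 0..δ, exp κ / 2 := by
        rw [intervalIntegral.integral_const, smul_eq_mul, hδ]; field_simp; ring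
    _ ≤ ∫ t in 0..δ, exp (κ * cos t) :=
        integral_mono_on hδ₀.le intervalIntegrable_const
          (Continuous.intervalIntegrable (by fun_prop) _ _) hhead
    _ ≤ ∫ t in 0..2 * π, exp (κ * cos t) :=
        integral_mono_interval le_rfl hδ₀.le (by linarith [pi_gt_three])
          (ae_of_all _ fun _ => (exp_pos _).le) (Continuous.intervalIntegrable (by fun_prop) _ _)

theorem circularVariance_sub_one_div_two_mul_eq {κ : ℝ} (hκ : κ ≠ 0) :
    circularVariance κ - 1 / (2 * κ) =
      (∫ t in 0..2 * π, varianceDefect κ t) / (2 * κ * ∫ t in 0..2 * π, exp (κ * cos t)) := by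
  have hB : 0 < ∫ t in 0..2 * π, exp (κ * cos t) :=
    intervalIntegral_pos_of_pos_on (Continuous.intervalIntegrable (by fun_prop) _ _)
      (fun _ _ => exp_pos _) two_pi_pos
  have hS : ∫ t in 0..2 * π, varianceDefect κ t =
      (2 * κ - 1) * (∫ t in 0..2 * π, exp (κ * cos t)) -
        2 * κ * ∫ t in 0..2 * π, cos t * exp (κ * cos t) := by
    rw [← intervalIntegral.integral_const_mul, ← intervalIntegral.integral_const_mul,
      ← integral_sub (Continuous.intervalIntegrable (by fun_prop) _ _)
        (Continuous.intervalIntegrable (by fun_prop) _ _)]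
    exact integral_congr fun t _ => by rw [varianceDefect]; ring
  rw [hS, circularVariance, besselI1, besselI0, mul_div_mul_left _ _ (by positivity)]
  generalize ∫ t in 0..2 * π, exp (κ * cos t) = B at hB ⊢
  generalize ∫ t in 0..2 * π, cos t * exp (κ * cos t) = C
  field_simp
  ring

theorem eventually_abs_circularVariance_sub_le :
    ∀ᶠ κ : ℝ in atTop, |circularVariance κ - 1 / (2 * κ)| ≤ 32 / κ ^ 2 := by
  filter_upwards [eventually_ge_atTop 1, eventually_le_exp_div_mul_sqrt] with κ hκ hpoly
  have hκ₀ : 0 < κ := by linarith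
  have hB := exp_div_two_mul_sqrt_le_integral_exp_mul_cos hκ
  have hB₀ : 0 < exp κ / (2 * √κ) := by positivity
  have hS := abs_integral_varianceDefect_le hκ₀
  rw [circularVariance_sub_one_div_two_mul_eq hκ₀.ne', abs_div,
    abs_of_pos (by nlinarith : 0 < 2 * κ * ∫ t in 0..2 * π, exp (κ * cos t))]
  have hsplit : 32 * exp κ / (κ * √κ) = 2 * (15 * exp κ / (κ * √κ) + exp κ / (κ * √κ)) := by
    ring
  calc _ ≤ 32 * exp κ / (κ * √κ) / (2 * κ * (exp κ / (2 * √κ))) :=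
        div_le_div₀ (by positivity) (by linarith) (by positivity) (by gcongr)
    _ = 32 / κ ^ 2 := by field_simp

theorem circularVariance_asymptotics :
    Tendsto circularVariance atTop (nhds 0) ∧
      (fun κ : ℝ => circularVariance κ - 1 / (2 * κ)) =O[atTop]
        (fun κ : ℝ => 1 / κ ^ 2) := by
  have hO : (fun κ : ℝ => circularVariance κ - 1 / (2 * κ)) =O[atTop] fun κ : ℝ => 1 / κ ^ 2 :=
    IsBigO.of_bound 32 <| eventually_abs_circularVariance_sub_le.mono fun κ hκ => by
      rwa [norm_eq_abs, norm_of_nonneg (by positivity), mul_one_div]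
  have hrem := hO.trans_tendsto (tendsto_const_nhds.div_atTop (tendsto_pow_atTop two_ne_zero))
  have hmain : Tendsto (fun κ : ℝ => 1 / (2 * κ)) atTop (nhds 0) :=
    tendsto_const_nhds.div_atTop (tendsto_id.const_mul_atTop two_pos)
  exact ⟨by simpa using hrem.add hmain, hO⟩
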